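/- arXiv:2501.06684 — 3 statements merged into one kernel-verified Lean document; each statement's English description precedes it below -/
import Mathlib

section
/- Let c > 0, d ≥ 0, and nonnegative sequences (b_i), (π_i) with m_br := −d + ∑ i·π_i finite and m_int := −c + ∑ i·b_i < 0. Define φ(z) = (z+1)·[ z·(−d·log(1+1/z) + ∑_i π_i·log(1+i/(z+1))) + z(z−1)·(−c·log(1+1/z) + ∑_i b_i·log(1+i/(z+1))) ] for z > 0. Then φ(z) / z² → m_int as z → ∞. -/
open Filter

lemma key_tsum_limit (b : ℕ → ℝ) (hb : ∀ i, 0 ≤ b i)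
    (hsumb : Summable (fun i : ℕ => (i : ℝ) * b i)) :
    Tendsto (fun z : ℝ => (z + 1) * ∑' i : ℕ, b i * Real.log (1 + (i : ℝ) / (z + 1)))
      atTop (nhds (∑' i : ℕ, (i : ℝ) * b i)) := by
  have h := tendsto_tsum_of_dominated_convergence (𝓕 := atTop)
      (f := fun z (i : ℕ) => (z + 1) * (b i * Real.log (1 + (i : ℝ) / (z + 1))))
      (g := fun i : ℕ => (i : ℝ) * b i) (bound := fun i : ℕ => (i : ℝ) * b i)
      hsumb ?_ ?_
  · refine h.congr (fun z => ?_)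
    rw [tsum_mul_left]
  · intro k
    have h1 : Tendsto (fun z : ℝ => z + 1) atTop atTop := tendsto_atTop_add_const_right _ 1 tendsto_id
    have h2 := (Real.tendsto_mul_log_one_add_div_atTop (k : ℝ)).comp h1
    have h3 := h2.const_mul (b k)
    have heq : (fun z : ℝ => (z + 1) * (b k * Real.log (1 + (k : ℝ) / (z + 1))))
        = fun z : ℝ => b k * ((z + 1) * Real.log (1 + (k : ℝ) / (z + 1))) := by
      funext z; ring
    rw [heq]
    simpa [mul_comm] using h3
  · filter_upwards [eventually_ge_atTop (0 : ℝ)] with z hz k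
    have hz1 : (0:ℝ) < z + 1 := by linarith
    have hk : (0:ℝ) ≤ (k : ℝ) / (z + 1) := div_nonneg (Nat.cast_nonneg k) hz1.le
    have hlog0 : 0 ≤ Real.log (1 + (k : ℝ) / (z + 1)) := Real.log_nonneg (by linarith)
    have hlog : Real.log (1 + (k : ℝ) / (z + 1)) ≤ (k : ℝ) / (z + 1) := by
      have := Real.log_le_sub_one_of_pos (x := 1 + (k : ℝ) / (z + 1)) (by linarith)
      linarith
    rw [Real.norm_eq_abs, abs_of_nonneg (mul_nonneg hz1.le (mul_nonneg (hb k) hlog0))]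
    calc (z + 1) * (b k * Real.log (1 + (k : ℝ) / (z + 1)))
        ≤ (z + 1) * (b k * ((k : ℝ) / (z + 1))) := by
          exact mul_le_mul_of_nonneg_left (mul_le_mul_of_nonneg_left hlog (hb k)) hz1.le
      _ = (k : ℝ) * b k := by field_simp

theorem phi_asymptotic (c d : ℝ) (hc : 0 < c) (hd : 0 ≤ d)
    (b π : ℕ → ℝ) (hb : ∀ i, 0 ≤ b i) (hπ : ∀ i, 0 ≤ π i)
    (hsumb : Summable (fun i : ℕ => (i : ℝ) * b i))
    (hsumπ : Summable (fun i : ℕ => (i : ℝ) * π i))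
    (hm : -c + ∑' i : ℕ, (i : ℝ) * b i < 0) :
    Tendsto (fun z : ℝ =>
      ((z + 1) *
        (z * (-(d * Real.log (1 + 1 / z))
              + ∑' i : ℕ, π i * Real.log (1 + (i : ℝ) / (z + 1)))
         + z * (z - 1) * (-(c * Real.log (1 + 1 / z))
              + ∑' i : ℕ, b i * Real.log (1 + (i : ℝ) / (z + 1))))) / z ^ 2)
      atTop (nhds (-c + ∑' i : ℕ, (i : ℝ) * b i)) := by
  have hL : Tendsto (fun z : ℝ => z * Real.log (1 + 1 / z)) atTop (nhds 1) := by
    simpa using Real.tendsto_mul_log_one_add_div_atTop 1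
  have hTb := key_tsum_limit b hb hsumb
  have hTπ := key_tsum_limit π hπ hsumπ
  have hinv : Tendsto (fun z : ℝ => 1 / z) atTop (nhds 0) := by
    simpa [one_div] using tendsto_inv_atTop_zero
  have t0 : Tendsto (fun z : ℝ => 1 - 1 / z) atTop (nhds 1) := by
    simpa using tendsto_const_nhds.sub hinv
  have t1 : Tendsto (fun z : ℝ => 1 + 1 / z) atTop (nhds 1) := by
    simpa using tendsto_const_nhds.add hinv
  have big := (((hL.const_mul (-d)).mul (hinv.mul t1)).add (hTπ.mul hinv)).add
      (((hL.const_mul (-c)).mul (t0.mul t1)).add (hTb.mul t0))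
  have lim : Tendsto (fun z : ℝ =>
      (-d) * (z * Real.log (1 + 1 / z)) * ((1 / z) * (1 + 1 / z))
      + ((z + 1) * ∑' i : ℕ, π i * Real.log (1 + (i : ℝ) / (z + 1))) * (1 / z)
      + ((-c) * (z * Real.log (1 + 1 / z)) * ((1 - 1 / z) * (1 + 1 / z))
      + ((z + 1) * ∑' i : ℕ, b i * Real.log (1 + (i : ℝ) / (z + 1))) * (1 - 1 / z)))
      atTop (nhds (-c + ∑' i : ℕ, (i : ℝ) * b i)) := by
    convert big using 2
    ring
  refine lim.congr' ?_
  filter_upwards [eventually_ge_atTop (1 : ℝ)] with z hz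
  have hz0 : z ≠ 0 := by linarith
  field_simp
end

section
/- Let φ : (z₀, ∞) → ℝ be continuous, strictly negative, with φ(z)/z² → m as z → ∞ for some m < 0, and such that g(z) := ∫_z^∞ dx/(−φ(x)) is finite for all z > z₀. Define v_t for small t > 0 by the equation ∫_{v_t}^∞ dx/(−φ(x)) = t (i.e., v_t = g⁻¹(t)). Then −m·t·v_t → 1 as t ↓ 0; equivalently v_t ~ −1/(m·t) as t ↓ 0. -/
open Filter MeasureTheory

private lemma aux_int_rpow (d z : ℝ) (hz : 0 < z) :
    ∫ x in Set.Ioi z, d * x ^ (-2 : ℝ) = d * z⁻¹ := by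
  rw [integral_const_mul, integral_Ioi_rpow_of_lt (by norm_num) hz]
  norm_num [Real.rpow_neg_one]

theorem speed_coming_down_asymptotic (z₀ : ℝ) (hz₀ : 0 < z₀) (φ : ℝ → ℝ)
    (hcont : ContinuousOn φ (Set.Ioi z₀)) (hneg : ∀ z ∈ Set.Ioi z₀, φ z < 0)
    (m : ℝ) (hm : m < 0)
    (hasymp : Tendsto (fun z : ℝ => φ z / z ^ 2) atTop (nhds m))
    (hint : ∀ z : ℝ, z₀ < z → IntegrableOn (fun x : ℝ => 1 / (-φ x)) (Set.Ioi z))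
    (T : ℝ) (hT : 0 < T) (v : ℝ → ℝ)
    (hv : ∀ t ∈ Set.Ioo 0 T, z₀ < v t ∧ (∫ x in Set.Ioi (v t), 1 / (-φ x)) = t) :
    Tendsto (fun t : ℝ => -m * t * v t) (nhdsWithin 0 (Set.Ioi 0)) (nhds 1) := by
  set g : ℝ → ℝ := fun z => ∫ x in Set.Ioi z, 1 / (-φ x) with hgdef
  have hfpos : ∀ x ∈ Set.Ioi z₀, 0 < 1 / (-φ x) := by
    intro x hx
    have h := hneg x hx
    have : 0 < -φ x := by linarith
    positivity
  have hsplit : ∀ a b : ℝ, z₀ < a → a ≤ b →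
      g a = (∫ x in Set.Ioc a b, 1 / (-φ x)) + g b := by
    intro a b ha hab
    rw [hgdef]
    simp only
    rw [← Set.Ioc_union_Ioi_eq_Ioi hab,
      MeasureTheory.setIntegral_union (Set.Ioc_disjoint_Ioi le_rfl) measurableSet_Ioi
        ((hint a ha).mono_set Set.Ioc_subset_Ioi_self) (hint b (lt_of_lt_of_le ha hab))]
  have hIocnonneg : ∀ a b : ℝ, z₀ < a → 0 ≤ ∫ x in Set.Ioc a b, 1 / (-φ x) := by
    intro a b ha
    refine setIntegral_nonneg measurableSet_Ioc fun x hx => (hfpos x ?_).le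
    exact Set.mem_Ioi.2 (lt_trans ha hx.1)
  have hgnonneg : ∀ a : ℝ, z₀ < a → 0 ≤ g a := by
    intro a ha
    refine setIntegral_nonneg measurableSet_Ioi fun x hx => (hfpos x ?_).le
    exact Set.mem_Ioi.2 (lt_trans ha hx)
  have hganti : ∀ a b : ℝ, z₀ < a → a ≤ b → g b ≤ g a := by
    intro a b ha hab
    rw [hsplit a b ha hab]
    linarith [hIocnonneg a b ha]
  have hgpos : ∀ a : ℝ, z₀ < a → 0 < g a := by
    intro a ha
    have h1 := hsplit a (a + 1) ha (by linarith)
    have h2 := hgnonneg (a + 1) (by linarith)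
    have h3 : 0 < ∫ x in Set.Ioc a (a + 1), 1 / (-φ x) := by
      rw [← intervalIntegral.integral_of_le (by linarith : a ≤ a + 1)]
      apply intervalIntegral.intervalIntegral_pos_of_pos_on
      · rw [intervalIntegrable_iff, Set.uIoc_of_le (by linarith : a ≤ a + 1)]
        exact (hint a ha).mono_set Set.Ioc_subset_Ioi_self
      · intro x hx
        exact hfpos x (Set.mem_Ioi.2 (lt_trans ha hx.1))
      · linarith
    linarith
  -- v t tends to infinity
  have hvtop : Tendsto v (nhdsWithin 0 (Set.Ioi 0)) atTop := by
    rw [tendsto_atTop]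
    intro b
    set M := max b (z₀ + 1) with hM
    have hMz : z₀ < M := lt_of_lt_of_le (by linarith) (le_max_right _ _)
    have hgM := hgpos M hMz
    have hev : ∀ᶠ t in nhdsWithin 0 (Set.Ioi 0), t < min T (g M) :=
      eventually_nhdsWithin_of_eventually_nhds
        (eventually_lt_nhds (lt_min hT hgM))
    filter_upwards [hev, self_mem_nhdsWithin] with t ht ht0
    have htT : t ∈ Set.Ioo 0 T := ⟨ht0, lt_of_lt_of_le ht (min_le_left _ _)⟩
    obtain ⟨hv1, hv2⟩ := hv t htT
    by_contra h
    push_neg at h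
    have hvM : v t ≤ M := le_trans h.le (le_max_left _ _)
    have : g M ≤ g (v t) := hganti (v t) M hv1 hvM
    have hle : g M ≤ t := le_of_le_of_eq this hv2
    have : t < g M := lt_of_lt_of_le ht (min_le_right _ _)
    linarith
  -- the key squeeze estimate
  have key : ∀ ε : ℝ, 0 < ε → ε < -m →
      ∀ᶠ z in atTop, (-m + ε)⁻¹ ≤ z * g z ∧ z * g z ≤ (-m - ε)⁻¹ := by
    intro ε hε hεm
    have hc₁ : 0 < -m + ε := by linarith
    have hc₂ : 0 < -m - ε := by linarith
    obtain ⟨N, hN⟩ := Metric.tendsto_atTop.mp hasymp ε hε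
    filter_upwards [eventually_gt_atTop (max N (max z₀ 0))] with z hz
    have hzN : N ≤ z := le_of_lt (lt_of_le_of_lt (le_max_left _ _) hz)
    have hzz₀ : z₀ < z := lt_of_le_of_lt (le_trans (le_max_left _ _) (le_max_right _ _)) hz
    have hz0 : 0 < z := lt_of_le_of_lt (le_trans (le_max_right _ _) (le_max_right _ _)) hz
    have hbnd : ∀ x ∈ Set.Ioi z, (-m + ε)⁻¹ * x ^ (-2 : ℝ) ≤ 1 / (-φ x) ∧
        1 / (-φ x) ≤ (-m - ε)⁻¹ * x ^ (-2 : ℝ) := by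
      intro x hx
      have hxz : z < x := hx
      have hx0 : 0 < x := lt_trans hz0 hxz
      have hx2 : (0:ℝ) < x ^ 2 := by positivity
      have hd := hN x (le_of_lt (lt_of_le_of_lt hzN hxz))
      rw [Real.dist_eq, abs_lt] at hd
      have hφu : φ x < (m + ε) * x ^ 2 := by
        have h1 : φ x / x ^ 2 < m + ε := by linarith [hd.2]
        rw [div_lt_iff₀ hx2] at h1
        linarith
      have hφl : (m - ε) * x ^ 2 < φ x := by
        have h1 : m - ε < φ x / x ^ 2 := by linarith [hd.1]
        rw [lt_div_iff₀ hx2] at h1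
        linarith
      have hrw : x ^ (-2 : ℝ) = (x ^ 2)⁻¹ := by
        rw [Real.rpow_neg hx0.le, Real.rpow_two]
      have hub : 1 / (-φ x) ≤ (-m - ε)⁻¹ * x ^ (-2 : ℝ) := by
        rw [hrw, ← mul_inv, ← one_div]
        apply one_div_le_one_div_of_le (by positivity)
        nlinarith
      have hlb : (-m + ε)⁻¹ * x ^ (-2 : ℝ) ≤ 1 / (-φ x) := by
        rw [hrw, ← mul_inv, ← one_div]
        have hφpos : 0 < -φ x := by
          have := hneg x (Set.mem_Ioi.2 (lt_trans hzz₀ hxz)); linarith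
        apply one_div_le_one_div_of_le hφpos
        nlinarith
      exact ⟨hlb, hub⟩
    have hInt2 : ∀ c : ℝ, IntegrableOn (fun x => c * x ^ (-2 : ℝ)) (Set.Ioi z) :=
      fun c => (integrableOn_Ioi_rpow_of_lt (by norm_num) hz0).const_mul c
    have hgub : g z ≤ (-m - ε)⁻¹ * z⁻¹ := by
      rw [← aux_int_rpow _ _ hz0]
      exact setIntegral_mono_on (hint z hzz₀) (hInt2 _) measurableSet_Ioi
        fun x hx => (hbnd x hx).2
    have hglb : (-m + ε)⁻¹ * z⁻¹ ≤ g z := by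
      rw [← aux_int_rpow _ _ hz0]
      exact setIntegral_mono_on (hInt2 _) (hint z hzz₀) measurableSet_Ioi
        fun x hx => (hbnd x hx).1
    constructor
    · calc (-m + ε)⁻¹ = z * ((-m + ε)⁻¹ * z⁻¹) := by field_simp
        _ ≤ z * g z := by apply mul_le_mul_of_nonneg_left hglb hz0.le
    · calc z * g z ≤ z * ((-m - ε)⁻¹ * z⁻¹) := by
            apply mul_le_mul_of_nonneg_left hgub hz0.le
        _ = (-m - ε)⁻¹ := by field_simp
  have hminv : (0:ℝ) < (-m)⁻¹ := by
    have : (0:ℝ) < -m := by linarith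
    positivity
  -- the main asymptotic
  have hmain : Tendsto (fun z => z * g z) atTop (nhds (-m)⁻¹) := by
    rw [tendsto_order]
    constructor
    · intro a ha
      rcases le_or_gt a 0 with h0 | h0
      · have hk := key (-m / 2) (by linarith) (by linarith)
        filter_upwards [hk] with z hz
        have hp : (0:ℝ) < (-m + -m / 2)⁻¹ := by
          have : (0:ℝ) < -m + -m / 2 := by linarith
          positivity
        linarith [hz.1]
      · have ha' : -m < a⁻¹ := by
          rw [← inv_inv (-m)]
          exact inv_strictAnti₀ h0 ha
        set ε := min ((a⁻¹ + m) / 2) (-m / 2) with hεdef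
        have hε : 0 < ε := lt_min (by linarith) (by linarith)
        have hεm : ε < -m := lt_of_le_of_lt (min_le_right _ _) (by linarith)
        have hk := key ε hε hεm
        filter_upwards [hk] with z hz
        have h3 : -m + ε < a⁻¹ := by
          have h4 : ε ≤ (a⁻¹ + m) / 2 := min_le_left _ _
          linarith
        have h5 : a < (-m + ε)⁻¹ := by
          rw [← inv_inv a]
          exact inv_strictAnti₀ (by linarith) h3
        linarith [hz.1]
    · intro a ha
      have ha0 : 0 < a := lt_trans hminv ha
      have hainv : 0 < a⁻¹ := by positivity
      have ha' : a⁻¹ < -m := by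
        rw [← inv_inv (-m)]
        exact inv_strictAnti₀ hminv ha
      set ε := (-m - a⁻¹) / 2 with hεdef
      have hε : 0 < ε := by linarith
      have hεm : ε < -m := by linarith
      have hk := key ε hε hεm
      filter_upwards [hk] with z hz
      have h3 : a⁻¹ < -m - ε := by linarith
      have h5 : (-m - ε)⁻¹ < a := by
        rw [← inv_inv a]
        exact inv_strictAnti₀ hainv h3
      linarith [hz.2]
  -- assemble
  have hcomp : Tendsto (fun t => v t * g (v t)) (nhdsWithin 0 (Set.Ioi 0))
      (nhds (-m)⁻¹) := hmain.comp hvtop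
  have hfin := hcomp.const_mul (-m)
  rw [mul_inv_cancel₀ (by linarith : (-m) ≠ 0)] at hfin
  have hev : ∀ᶠ t in nhdsWithin 0 (Set.Ioi 0),
      -m * (v t * g (v t)) = -m * t * v t := by
    have hevT : ∀ᶠ t in nhdsWithin 0 (Set.Ioi 0), t < T :=
      eventually_nhdsWithin_of_eventually_nhds (eventually_lt_nhds hT)
    filter_upwards [hevT, self_mem_nhdsWithin] with t h1 h2
    obtain ⟨_, he⟩ := hv t ⟨h2, h1⟩
    rw [show g (v t) = t from he]
    ring
  exact hfin.congr' hev
end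

section
/- Suppose φ : (z₀, ∞) → ℝ is strictly negative and continuous with ∫_z^∞ dx/(−φ(x)) < ∞ for all z > z₀, and φ(z)/z² → m < 0 as z → ∞. Define v_t by ∫_{v_t}^∞ dx/(−φ(x)) = t. Then for every t₀ in the domain of v there exists a constant C > 0 such that v_s ≤ C/s for all s ∈ (0, t₀]. -/
open Filter MeasureTheory

theorem speed_quantitative_bound (z₀ : ℝ) (hz₀ : 0 < z₀) (φ : ℝ → ℝ)
    (hcont : ContinuousOn φ (Set.Ioi z₀)) (hneg : ∀ z ∈ Set.Ioi z₀, φ z < 0)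
    (hint : ∀ z : ℝ, z₀ < z → IntegrableOn (fun x : ℝ => 1 / (-φ x)) (Set.Ioi z))
    (m : ℝ) (hm : m < 0)
    (hasymp : Tendsto (fun z : ℝ => φ z / z ^ 2) atTop (nhds m))
    (T : ℝ) (hT : 0 < T) (v : ℝ → ℝ)
    (hv : ∀ t ∈ Set.Ioo 0 T, z₀ < v t ∧ (∫ x in Set.Ioi (v t), 1 / (-φ x)) = t) :
    ∀ t₀ : ℝ, 0 < t₀ → t₀ < T →
      ∃ C : ℝ, 0 < C ∧ ∀ s ∈ Set.Ioc (0 : ℝ) t₀, v s ≤ C / s := by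
  intro t₀ ht₀ ht₀T
  have hm' : (0:ℝ) < -m := by linarith
  obtain ⟨z₁', hz₁'⟩ := eventually_atTop.mp
    (hasymp.eventually (eventually_lt_nhds (by linarith : m < m / 2)))
  set z₁ : ℝ := max z₁' (z₀ + 1) with hz₁def
  have hz₁pos : 0 < z₁ := lt_of_lt_of_le (by linarith) (le_max_right _ _)
  have hz₁z₀ : z₀ < z₁ := lt_of_lt_of_le (by linarith) (le_max_right _ _)
  -- pointwise bound for z ≥ z₁
  have key : ∀ z : ℝ, z₁ ≤ z → 1 / (-φ z) ≤ (2 / (-m)) * z ^ (-2 : ℝ) := by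
    intro z hz
    have hzpos : 0 < z := lt_of_lt_of_le hz₁pos hz
    have h1 : φ z / z ^ 2 < m / 2 := hz₁' z (le_trans (le_max_left _ _) hz)
    have hz2 : (0:ℝ) < z ^ 2 := by positivity
    have h2 : φ z < m / 2 * z ^ 2 := by
      have := (div_lt_iff₀ hz2).mp h1
      linarith
    have h3 : (0:ℝ) < -m / 2 * z ^ 2 := by positivity
    have h4 : -m / 2 * z ^ 2 ≤ -φ z := by linarith
    have h5 : 1 / (-φ z) ≤ 1 / (-m / 2 * z ^ 2) := one_div_le_one_div_of_le h3 h4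
    have h6 : z ^ (-2 : ℝ) = (z ^ 2)⁻¹ := by
      rw [show (-2 : ℝ) = -(2:ℕ) by norm_num, Real.rpow_neg hzpos.le, Real.rpow_natCast]
    rw [h6]
    calc 1 / (-φ z) ≤ 1 / (-m / 2 * z ^ 2) := h5
      _ = 2 / (-m) * (z ^ 2)⁻¹ := by field_simp
  refine ⟨max (2 / (-m)) (z₁ * t₀), lt_max_of_lt_right (by positivity), ?_⟩
  intro s hs
  obtain ⟨hs0, hst₀⟩ := hs
  have hsT : s ∈ Set.Ioo 0 T := ⟨hs0, lt_of_le_of_lt hst₀ ht₀T⟩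
  obtain ⟨hvz₀, hvint⟩ := hv s hsT
  have hvpos : 0 < v s := lt_trans hz₀ hvz₀
  by_cases hcase : v s ≤ z₁
  · -- small case
    calc v s ≤ z₁ := hcase
      _ ≤ (z₁ * t₀) / s := by
          rw [le_div_iff₀ hs0]
          exact mul_le_mul_of_nonneg_left hst₀ hz₁pos.le
      _ ≤ max (2 / (-m)) (z₁ * t₀) / s :=
          div_le_div_of_nonneg_right (le_max_right _ _) hs0.le |>.trans_eq rfl
  · push_neg at hcase
    have hIoi : Set.Ioi (v s) ⊆ Set.Ioi z₁ := Set.Ioi_subset_Ioi hcase.le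
    have hintg : IntegrableOn (fun x : ℝ => (2 / (-m)) * x ^ (-2 : ℝ)) (Set.Ioi (v s)) :=
      (integrableOn_Ioi_rpow_of_lt (by norm_num) hvpos).const_mul _
    have hmono : s ≤ ∫ x in Set.Ioi (v s), (2 / (-m)) * x ^ (-2 : ℝ) := by
      have h := setIntegral_mono_on (hint _ hvz₀) hintg measurableSet_Ioi
        (fun x hx => key x (le_of_lt (hcase.trans hx)))
      rwa [hvint] at h
    have hcomp : ∫ x in Set.Ioi (v s), (2 / (-m)) * x ^ (-2 : ℝ)
        = (2 / (-m)) * (v s)⁻¹ := by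
      rw [integral_const_mul, integral_Ioi_rpow_of_lt (by norm_num) hvpos]
      norm_num [Real.rpow_neg_one]
    have h7 : s * v s ≤ 2 / (-m) := by
      rw [hcomp] at hmono
      have := mul_le_mul_of_nonneg_right hmono hvpos.le
      rwa [mul_assoc, inv_mul_cancel₀ hvpos.ne', mul_one] at this
    have : v s ≤ (2 / (-m)) / s := by
      rw [le_div_iff₀ hs0]
      linarith [h7]
    exact this.trans (div_le_div_of_nonneg_right (le_max_left _ _) hs0.le)
end
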